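/- Let y ∈ (0,1) and 0 < n̲ < n̄, and define the likelihood ratio L(l) = p(l | y, n̄, m, s, N) / p(l | y, n̲, m, s, N) for l ∈ {0,…,m}. If L(0) ≤ 1 and L(m) ≥ 1, then the Beta-Binomial distribution with prior strength n̄ first-order stochastically dominates the one with prior strength n̲; and if L(0) ≥ 1 and L(m) ≤ 1, then the Beta-Binomial distribution with prior strength n̲ first-order stochastically dominates the one with prior strength n̄. -/

import Mathlib

/-!
With `α = ny + s` and `β = n(1-y) + N - s`, consecutive Beta-Binomial probabilities satisfy
`p(l+1) (l+1) (β + m - l - 1) = p(l) (m - l) (α + l)`. Hence the likelihood ratio `L` of the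
strengths `n̄ > n̲` steps down at `l` exactly when a function of `l` that is affine with slope
`-(n̄ - n̲)` is nonpositive, so once `L` decreases it keeps decreasing: `L` is quasi-concave on
`{0, …, m}`. If `L(m) ≥ 1`, the set `{L ≥ 1}` is therefore an interval ending at `m`, so the
two mass functions cross once; having equal total mass, their partial sums are ordered. If
`L(0) ≥ 1`, the same argument applies with the roles of the two distributions exchanged.
-/

/-- The Euler Beta function `B(a,b) = Γ(a)Γ(b)/Γ(a+b)`. -/
noncomputable def eulerBeta (a b : ℝ) : ℝ := Real.Gamma a * Real.Gamma b / Real.Gamma (a + b)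

/-- The Beta-Binomial probability mass function
`p(l ∣ y, n, m, s, N) = C(m,l) · B(l + ny + s, m − l + n(1−y) + N − s) / B(ny + s, n(1−y) + N − s)`. -/
noncomputable def bbPmf (y n : ℝ) (m s N : ℕ) (l : ℕ) : ℝ :=
  (m.choose l : ℝ) *
    eulerBeta ((l : ℝ) + n * y + s) ((m : ℝ) - l + n * (1 - y) + N - s) /
    eulerBeta (n * y + s) (n * (1 - y) + N - s)

open Finset

lemma eulerBeta_pos {a b : ℝ} (ha : 0 < a) (hb : 0 < b) : 0 < eulerBeta a b := by
  unfold eulerBeta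
  have := Real.Gamma_pos_of_pos ha
  have := Real.Gamma_pos_of_pos hb
  have := Real.Gamma_pos_of_pos (add_pos ha hb)
  positivity

lemma eulerBeta_add_one_left_add_eulerBeta_add_one_right {a b : ℝ} (ha : 0 < a) (hb : 0 < b) :
    eulerBeta (a + 1) b + eulerBeta a (b + 1) = eulerBeta a b := by
  unfold eulerBeta
  rw [add_right_comm, ← add_assoc, Real.Gamma_add_one ha.ne', Real.Gamma_add_one hb.ne',
    Real.Gamma_add_one (add_pos ha hb).ne']
  have := (Real.Gamma_pos_of_pos (add_pos ha hb)).ne'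
  field_simp

lemma mul_eulerBeta_add_one_left {a b : ℝ} (ha : a ≠ 0) (hb : b ≠ 0) :
    b * eulerBeta (a + 1) b = a * eulerBeta a (b + 1) := by
  unfold eulerBeta
  rw [Real.Gamma_add_one ha, Real.Gamma_add_one hb, add_right_comm, add_assoc]
  ring

/-- Pascal's rule on the left matches the recurrence `B(a+1,b) + B(a,b+1) = B(a,b)` on the
right. -/
theorem sum_choose_mul_eulerBeta (m : ℕ) {a b : ℝ} (ha : 0 < a) (hb : 0 < b) :
    ∑ l ∈ range (m + 1), (m.choose l : ℝ) * eulerBeta (a + l) (b + ↑(m - l)) = eulerBeta a b := by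
  induction m generalizing a b with
  | zero => simp
  | succ m ih =>
    have shift_b : ∑ l ∈ range (m + 1), (m.choose l : ℝ) * eulerBeta (a + l) (b + ↑(m + 1 - l)) =
        eulerBeta a (b + 1) := by
      rw [← ih ha (by positivity)]
      refine sum_congr rfl fun l hl => ?_
      rw [Nat.sub_add_comm (Nat.lt_succ_iff.mp (mem_range.mp hl))]
      push_cast
      ring_nf
    have shift_a : ∑ l ∈ range (m + 1), (m.choose l : ℝ) * eulerBeta (a + ↑(l + 1)) (b + ↑(m - l)) =
        eulerBeta (a + 1) b := by
      rw [← ih (by positivity) hb]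
      push_cast
      ring_nf
    rw [sum_choose_succ_mul (fun i j => eulerBeta (a + i) (b + j)), shift_b, shift_a, add_comm,
      eulerBeta_add_one_left_add_eulerBeta_add_one_right ha hb]

theorem min_le_of_forall_descent_persists {α : Type*} [LinearOrder α] {r : ℕ → α} {m : ℕ}
    (hr : ∀ l j, l ≤ j → j < m → r (l + 1) ≤ r l → r (j + 1) ≤ r j)
    {i j k : ℕ} (hij : i ≤ j) (hjk : j ≤ k) (hkm : k ≤ m) : min (r i) (r k) ≤ r j := by
  by_cases hasc : ∀ l, i ≤ l → l < j → r l ≤ r (l + 1)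
  · have hmono : MonotoneOn r (Set.Icc i j) :=
      monotoneOn_of_le_add_one Set.ordConnected_Icc fun a _ ha ha' => hasc a ha.1 (by grind)
    exact min_le_of_left_le (hmono ⟨le_rfl, hij⟩ ⟨hij, le_rfl⟩ hij)
  · push Not at hasc
    obtain ⟨l, hil, hlj, hdesc⟩ := hasc
    have hanti : AntitoneOn r (Set.Icc j k) :=
      antitoneOn_of_add_one_le Set.ordConnected_Icc fun a _ ha ha' =>
        hr l a (hlj.le.trans ha.1) (by grind) hdesc.le
    exact min_le_of_right_le (hanti ⟨le_rfl, hjk⟩ ⟨hjk, le_rfl⟩ hjk)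

theorem sum_range_le_sum_range_of_single_crossing {M : Type*} [AddCommMonoid M] [LinearOrder M]
    [IsOrderedCancelAddMonoid M] {P Q : ℕ → M} {m : ℕ}
    (hsum : ∑ j ∈ range (m + 1), P j = ∑ j ∈ range (m + 1), Q j)
    (hcross : ∀ i j, i ≤ j → j ≤ m → Q i < P i → Q j ≤ P j) {l : ℕ} (hl : l ≤ m) :
    ∑ j ∈ range (l + 1), P j ≤ ∑ j ∈ range (l + 1), Q j := by
  by_cases hbelow : ∀ j ∈ range (l + 1), P j ≤ Q j
  · exact sum_le_sum hbelow
  push Not at hbelow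
  obtain ⟨i, hi, hQP⟩ := hbelow
  have htail : ∑ j ∈ Ico (l + 1) (m + 1), Q j ≤ ∑ j ∈ Ico (l + 1) (m + 1), P j :=
    sum_le_sum fun j hj => hcross i j (by grind) (by grind) hQP
  rw [← sum_range_add_sum_Ico P (Nat.succ_le_succ hl),
    ← sum_range_add_sum_Ico Q (Nat.succ_le_succ hl)] at hsum
  exact le_of_add_le_add_right (hsum.trans_le (add_le_add_right htail _))

section BetaBinomial

variable {y n : ℝ} {m s N l : ℕ}

lemma bbPmf_eq_of_le (hl : l ≤ m) :
    bbPmf y n m s N l = (m.choose l : ℝ) *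
      eulerBeta (n * y + s + l) (n * (1 - y) + N - s + ↑(m - l)) /
      eulerBeta (n * y + s) (n * (1 - y) + N - s) := by
  rw [bbPmf, Nat.cast_sub hl]
  ring_nf

variable (hα : 0 < n * y + s) (hβ : 0 < n * (1 - y) + N - s)
include hα hβ

lemma bbPmf_pos (hl : l ≤ m) : 0 < bbPmf y n m s N l := by
  rw [bbPmf_eq_of_le hl]
  have := Nat.choose_pos hl
  have := eulerBeta_pos (a := n * y + s + l) (b := n * (1 - y) + N - s + ↑(m - l))
    (by positivity) (by positivity)
  have := eulerBeta_pos hα hβ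
  positivity

lemma sum_bbPmf : ∑ l ∈ range (m + 1), bbPmf y n m s N l = 1 := by
  rw [sum_congr rfl fun l hl => bbPmf_eq_of_le (Nat.lt_succ_iff.mp (mem_range.mp hl)),
    ← sum_div, sum_choose_mul_eulerBeta m hα hβ, div_self (eulerBeta_pos hα hβ).ne']

lemma bbPmf_succ (hl : l < m) :
    bbPmf y n m s N (l + 1) = bbPmf y n m s N l *
      ((m - l) * (l + n * y + s) / ((l + 1) * (m - (l + 1) + n * (1 - y) + N - s))) := by
  set x := (l : ℝ) + n * y + s
  set z := (m : ℝ) - (l + 1) + n * (1 - y) + N - s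
  have hx : 0 < x := by
    have : (0 : ℝ) ≤ l := l.cast_nonneg
    linarith
  have hz : 0 < z := by
    have : (l : ℝ) + 1 ≤ m := by exact_mod_cast hl
    linarith
  have hchoose : (m.choose (l + 1) : ℝ) * (l + 1) = m.choose l * (m - l) := by
    have h := congrArg (Nat.cast : ℕ → ℝ) (Nat.choose_succ_right_eq m l)
    push_cast [Nat.cast_sub hl.le] at h
    exact h
  have hbeta := mul_eulerBeta_add_one_left hx.ne' hz.ne'
  have hD := (eulerBeta_pos hα hβ).ne'
  have e1 : ((l + 1 : ℕ) : ℝ) + n * y + s = x + 1 := by push_cast; ring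
  have e2 : (m : ℝ) - ((l + 1 : ℕ) : ℝ) + n * (1 - y) + N - s = z := by push_cast; ring
  have e3 : (m : ℝ) - l + n * (1 - y) + N - s = z + 1 := by ring
  unfold bbPmf
  rw [e1, e2, e3]
  field_simp
  linear_combination eulerBeta (x + 1) z * z * hchoose + m.choose l * (m - l) * hbeta

end BetaBinomial

section LikelihoodRatio

variable {y n₁ n₂ : ℝ} {m s N : ℕ}
  (hα₁ : 0 < n₁ * y + s) (hβ₁ : 0 < n₁ * (1 - y) + N - s)
  (hα₂ : 0 < n₂ * y + s) (hβ₂ : 0 < n₂ * (1 - y) + N - s)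
include hα₁ hβ₁ hα₂ hβ₂

lemma bbPmf_ratio_succ_le_iff {l : ℕ} (hl : l < m) :
    bbPmf y n₁ m s N (l + 1) / bbPmf y n₂ m s N (l + 1) ≤
        bbPmf y n₁ m s N l / bbPmf y n₂ m s N l ↔
      (l + n₁ * y + s) * (m - (l + 1) + n₂ * (1 - y) + N - s) ≤
        (l + n₂ * y + s) * (m - (l + 1) + n₁ * (1 - y) + N - s) := by
  have hp := bbPmf_pos hα₁ hβ₁ hl.le
  have hq := bbPmf_pos hα₂ hβ₂ hl.le
  rw [bbPmf_succ hα₁ hβ₁ hl, bbPmf_succ hα₂ hβ₂ hl]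
  set p := bbPmf y n₁ m s N l
  set q := bbPmf y n₂ m s N l
  have hml : (l : ℝ) + 1 ≤ m := by exact_mod_cast hl
  have hl0 : (0 : ℝ) ≤ l := l.cast_nonneg
  have hx₂ : 0 < (l : ℝ) + n₂ * y + s := by linarith
  have hz₁ : 0 < (m : ℝ) - (l + 1) + n₁ * (1 - y) + N - s := by linarith
  have hz₂ : 0 < (m : ℝ) - (l + 1) + n₂ * (1 - y) + N - s := by linarith
  have hc : (m : ℝ) - l ≠ 0 := by linarith
  rw [show p * ((m - l) * (l + n₁ * y + s) / ((l + 1) * (m - (l + 1) + n₁ * (1 - y) + N - s))) /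
      (q * ((m - l) * (l + n₂ * y + s) / ((l + 1) * (m - (l + 1) + n₂ * (1 - y) + N - s)))) =
      p / q * ((l + n₁ * y + s) * (m - (l + 1) + n₂ * (1 - y) + N - s) /
        ((l + n₂ * y + s) * (m - (l + 1) + n₁ * (1 - y) + N - s))) by field_simp,
    mul_le_iff_le_one_right (div_pos hp hq), div_le_one (by positivity)]

/-- The difference of the two sides in `bbPmf_ratio_succ_le_iff` is affine in `l` with slope
`-(n₁ - n₂)`. -/
lemma bbPmf_ratio_descent_persists (hn : n₂ ≤ n₁) :
    ∀ l j, l ≤ j → j < m →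
      bbPmf y n₁ m s N (l + 1) / bbPmf y n₂ m s N (l + 1) ≤
          bbPmf y n₁ m s N l / bbPmf y n₂ m s N l →
      bbPmf y n₁ m s N (j + 1) / bbPmf y n₂ m s N (j + 1) ≤
          bbPmf y n₁ m s N j / bbPmf y n₂ m s N j := by
  intro l j hlj hj hdesc
  rw [bbPmf_ratio_succ_le_iff hα₁ hβ₁ hα₂ hβ₂ (hlj.trans_lt hj)] at hdesc
  rw [bbPmf_ratio_succ_le_iff hα₁ hβ₁ hα₂ hβ₂ hj]
  have hlj' : (l : ℝ) ≤ j := by exact_mod_cast hlj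
  nlinarith [mul_nonneg (sub_nonneg.mpr hlj') (sub_nonneg.mpr hn)]

end LikelihoodRatio

theorem bbPmf_stochDom_strength_of_lr_endpoints_general (y nlo nhi : ℝ) (m s N : ℕ)
    (hy0 : 0 < y) (hy1 : y < 1) (hn0 : 0 < nlo) (hn : nlo < nhi)
    (hsN : s ≤ N) :
    (bbPmf y nhi m s N 0 / bbPmf y nlo m s N 0 ≤ 1 →
      1 ≤ bbPmf y nhi m s N m / bbPmf y nlo m s N m →
      ∀ l ≤ m, ∑ j ∈ Finset.range (l + 1), bbPmf y nhi m s N j ≤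
        ∑ j ∈ Finset.range (l + 1), bbPmf y nlo m s N j) ∧
    (1 ≤ bbPmf y nhi m s N 0 / bbPmf y nlo m s N 0 →
      bbPmf y nhi m s N m / bbPmf y nlo m s N m ≤ 1 →
      ∀ l ≤ m, ∑ j ∈ Finset.range (l + 1), bbPmf y nlo m s N j ≤
        ∑ j ∈ Finset.range (l + 1), bbPmf y nhi m s N j) := by
  have hparams : ∀ {n : ℝ}, 0 < n → 0 < n * y + s ∧ 0 < n * (1 - y) + N - s := fun hn' =>
    ⟨by positivity, by nlinarith [(Nat.cast_le (α := ℝ)).mpr hsN]⟩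
  obtain ⟨hα₀, hβ₀⟩ := hparams hn0
  obtain ⟨hα₁, hβ₁⟩ := hparams (hn0.trans hn)
  set P := bbPmf y nhi m s N
  set Q := bbPmf y nlo m s N
  have hQ : ∀ l ≤ m, 0 < Q l := fun l hl => bbPmf_pos hα₀ hβ₀ hl
  have hsum : ∑ j ∈ range (m + 1), P j = ∑ j ∈ range (m + 1), Q j := by
    rw [sum_bbPmf hα₁ hβ₁, sum_bbPmf hα₀ hβ₀]
  have hquasi {i j k : ℕ} (hij : i ≤ j) (hjk : j ≤ k) (hkm : k ≤ m) :
      min (P i / Q i) (P k / Q k) ≤ P j / Q j :=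
    min_le_of_forall_descent_persists (r := fun l => P l / Q l)
      (bbPmf_ratio_descent_persists hα₁ hβ₁ hα₀ hβ₀ hn.le) hij hjk hkm
  refine ⟨fun _ hLm l hl => sum_range_le_sum_range_of_single_crossing hsum ?_ hl,
    fun hL0 _ l hl => sum_range_le_sum_range_of_single_crossing hsum.symm ?_ hl⟩
  · intro i j hij hjm hi
    have hLi : 1 ≤ P i / Q i := ((one_lt_div (hQ i (hij.trans hjm))).mpr hi).le
    exact (one_le_div (hQ j hjm)).mp ((le_min hLi hLm).trans (hquasi hij hjm le_rfl))
  · intro i j hij hjm hi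
    by_contra! hj
    have hLj : 1 ≤ P j / Q j := ((one_lt_div (hQ j hjm)).mpr hj).le
    have hLi := (le_min hL0 hLj).trans (hquasi (Nat.zero_le i) hij hjm)
    exact hi.not_ge ((one_le_div (hQ i (hij.trans hjm))).mp hLi)

/-- Lemma 1: conditions on the likelihood ratio `L(l) = p(l ∣ y, n̄, ·)/p(l ∣ y, n̲, ·)` at the
endpoints `l = 0` and `l = m` which imply first-order stochastic dominance between the
Beta-Binomial distributions with prior strengths `n̄` and `n̲`. -/
theorem bbPmf_stochDom_strength_of_lr_endpoints (y nlo nhi : ℝ) (m s N : ℕ)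
    (hy0 : 0 < y) (hy1 : y < 1) (hn0 : 0 < nlo) (hn : nlo < nhi)
    (hm : 1 ≤ m) (hsN : s ≤ N) :
    (bbPmf y nhi m s N 0 / bbPmf y nlo m s N 0 ≤ 1 →
      1 ≤ bbPmf y nhi m s N m / bbPmf y nlo m s N m →
      ∀ l ≤ m, ∑ j ∈ Finset.range (l + 1), bbPmf y nhi m s N j ≤
        ∑ j ∈ Finset.range (l + 1), bbPmf y nlo m s N j) ∧
    (1 ≤ bbPmf y nhi m s N 0 / bbPmf y nlo m s N 0 →
      bbPmf y nhi m s N m / bbPmf y nlo m s N m ≤ 1 →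
      ∀ l ≤ m, ∑ j ∈ Finset.range (l + 1), bbPmf y nlo m s N j ≤
        ∑ j ∈ Finset.range (l + 1), bbPmf y nhi m s N j) :=
  bbPmf_stochDom_strength_of_lr_endpoints_general y nlo nhi m s N hy0 hy1 hn0 hn hsN
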